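/- Fix ω > 0 and η > 0 and let t* > 5/4 be the unique solution of (t* − 5/4) e^{t*} = 4η/ω. Define g(t) = ω (8ηt + 2η + ω e^{t}) / (4ηt + 3η + ω e^{t}) for t ≥ 0. Then g is strictly increasing on [0, t*] and strictly decreasing on [t*, ∞); in particular g attains a unique global maximum on [0, ∞) at t = t*, so the Shiha hazard rate h(y; ω, η) = g(ωy) attains a unique maximum at y* = t*/ω. -/

import Mathlib

/-!
With `t = ωy` the hazard rate becomes `g(t) = ω N(t) / D(t)` with `D > 0` on `[0, ∞)`, and a
direct computation gives `g' = ω η (16 η - 4 ω φ(t)) / D²` with `φ(t) = (t - 5/4) eᵗ`. The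
function `φ` is negative below `5/4` and strictly increasing above `1/4`, so
`φ(t) < φ(t*) = 4η/ω` exactly when `t < t*`: the derivative of `g` is positive before `t*` and
negative after it.
-/

open Real

noncomputable def shihaHazard (ω η y : ℝ) : ℝ :=
  ω * (ω + (2 * η + 8 * ω * η * y) * Real.exp (-ω * y))
    / (ω + (3 * η + 4 * ω * η * y) * Real.exp (-ω * y))

open Set

section SubMulExp

variable {a s t : ℝ}

theorem strictMonoOn_sub_mul_exp (a : ℝ) :
    StrictMonoOn (fun t : ℝ => (t - a) * exp t) (Ici (a - 1)) := by
  refine strictMonoOn_of_deriv_pos (convex_Ici _) (by fun_prop) fun x hx => ?_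
  rw [interior_Ici, mem_Ioi] at hx
  have hderiv : HasDerivAt (fun t : ℝ => (t - a) * exp t) (1 * exp x + (x - a) * exp x) x :=
    ((hasDerivAt_id x).sub_const a).mul (hasDerivAt_exp x)
  rw [hderiv.deriv, ← add_mul]
  exact mul_pos (by linarith) (exp_pos x)

theorem sub_mul_exp_lt_of_lt (hs : a < s) (hts : t < s) :
    (t - a) * exp t < (s - a) * exp s := by
  rcases le_or_gt t a with hta | hta
  · exact (mul_nonpos_of_nonpos_of_nonneg (by linarith) (exp_pos t).le).trans_lt
      (mul_pos (by linarith) (exp_pos s))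
  · exact strictMonoOn_sub_mul_exp a (by simp only [mem_Ici]; linarith)
      (by simp only [mem_Ici]; linarith) hts

theorem sub_mul_exp_lt_of_gt (hs : a < s) (hst : s < t) :
    (s - a) * exp s < (t - a) * exp t :=
  strictMonoOn_sub_mul_exp a (by simp only [mem_Ici]; linarith)
    (by simp only [mem_Ici]; linarith) hst

end SubMulExp

theorem StrictMonoOn.lt_of_strictAntiOn_Ici {f : ℝ → ℝ} {a b t : ℝ}
    (hmono : StrictMonoOn f (Icc a b)) (hanti : StrictAntiOn f (Ici b)) (hab : a ≤ b)
    (hat : a ≤ t) (htb : t ≠ b) : f t < f b := by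
  rcases htb.lt_or_gt with htb | hbt
  · exact hmono ⟨hat, htb.le⟩ ⟨hab, le_rfl⟩ htb
  · exact hanti self_mem_Ici hbt.le hbt

section RescaledHazard

noncomputable def shihaRescaledHazard (ω η t : ℝ) : ℝ :=
  ω * (8 * η * t + 2 * η + ω * exp t) / (4 * η * t + 3 * η + ω * exp t)

variable {ω η t : ℝ}

theorem shihaHazard_eq_shihaRescaledHazard (ω η y : ℝ) :
    shihaHazard ω η y = shihaRescaledHazard ω η (ω * y) := by
  have hexp : exp (-ω * y) * exp (ω * y) = 1 := by rw [← exp_add]; simp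
  rw [shihaHazard, shihaRescaledHazard, ← mul_div_mul_right _ _ (exp_pos (ω * y)).ne']
  congr 1
  · linear_combination (ω * (2 * η + 8 * ω * η * y)) * hexp
  · linear_combination (3 * η + 4 * ω * η * y) * hexp

theorem shihaRescaledHazard_denom_pos (hω : 0 < ω) (hη : 0 < η) (ht : 0 ≤ t) :
    0 < 4 * η * t + 3 * η + ω * exp t := by
  have := mul_pos hω (exp_pos t)
  nlinarith

theorem hasDerivAt_shihaRescaledHazard (hD : 4 * η * t + 3 * η + ω * exp t ≠ 0) :
    HasDerivAt (shihaRescaledHazard ω η)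
      (ω * η * (16 * η - 4 * ω * ((t - 5 / 4) * exp t))
        / (4 * η * t + 3 * η + ω * exp t) ^ 2) t := by
  have hN : HasDerivAt (fun t => ω * (8 * η * t + 2 * η + ω * exp t))
      (ω * (8 * η * 1 + ω * exp t)) t :=
    ((((hasDerivAt_id' t).const_mul _).add_const _).add
      ((hasDerivAt_exp t).const_mul ω)).const_mul ω
  have hD' : HasDerivAt (fun t => 4 * η * t + 3 * η + ω * exp t) (4 * η * 1 + ω * exp t) t :=
    (((hasDerivAt_id' t).const_mul _).add_const _).add ((hasDerivAt_exp t).const_mul ω)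
  exact (hN.div hD' hD).congr_deriv (by ring)

theorem continuousOn_shihaRescaledHazard (hω : 0 < ω) (hη : 0 < η) :
    ContinuousOn (shihaRescaledHazard ω η) (Ici 0) :=
  ContinuousOn.div (by fun_prop) (by fun_prop) fun _ ht =>
    (shihaRescaledHazard_denom_pos hω hη ht).ne'

section Maximum

variable {s : ℝ} (hω : 0 < ω) (hη : 0 < η) (hs : 5 / 4 < s)
  (heq : (s - 5 / 4) * exp s = 4 * η / ω)
include hω hη hs heq

theorem strictMonoOn_shihaRescaledHazard : StrictMonoOn (shihaRescaledHazard ω η) (Icc 0 s) := by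
  refine strictMonoOn_of_deriv_pos (convex_Icc 0 s)
    ((continuousOn_shihaRescaledHazard hω hη).mono Icc_subset_Ici_self) fun t ht => ?_
  rw [interior_Icc] at ht
  have hD := shihaRescaledHazard_denom_pos hω hη ht.1.le
  rw [(hasDerivAt_shihaRescaledHazard hD.ne').deriv]
  have hφ : 4 * ω * ((t - 5 / 4) * exp t) < 16 * η := by
    calc 4 * ω * ((t - 5 / 4) * exp t) < 4 * ω * ((s - 5 / 4) * exp s) :=
          mul_lt_mul_of_pos_left (sub_mul_exp_lt_of_lt hs ht.2) (by positivity)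
      _ = 16 * η := by rw [heq]; field_simp; ring
  exact div_pos (mul_pos (mul_pos hω hη) (by linarith)) (pow_pos hD 2)

theorem strictAntiOn_shihaRescaledHazard : StrictAntiOn (shihaRescaledHazard ω η) (Ici s) := by
  refine strictAntiOn_of_deriv_neg (convex_Ici s)
    ((continuousOn_shihaRescaledHazard hω hη).mono (Ici_subset_Ici.2 (by linarith)))
    fun t ht => ?_
  rw [interior_Ici, mem_Ioi] at ht
  have hD := shihaRescaledHazard_denom_pos hω hη (t := t) (by linarith)
  rw [(hasDerivAt_shihaRescaledHazard hD.ne').deriv]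
  have hφ : 16 * η < 4 * ω * ((t - 5 / 4) * exp t) := by
    calc 16 * η = 4 * ω * ((s - 5 / 4) * exp s) := by rw [heq]; field_simp; ring
      _ < 4 * ω * ((t - 5 / 4) * exp t) :=
          mul_lt_mul_of_pos_left (sub_mul_exp_lt_of_gt hs ht) (by positivity)
  exact div_neg_of_neg_of_pos (mul_neg_of_pos_of_neg (mul_pos hω hη) (by linarith))
    (pow_pos hD 2)

end Maximum

end RescaledHazard

theorem shiha_hazard_unique_max (ω η tstar : ℝ) (hω : 0 < ω) (hη : 0 < η)
    (ht : 5 / 4 < tstar) (heq : (tstar - 5 / 4) * Real.exp tstar = 4 * η / ω) :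
    StrictMonoOn
      (fun t : ℝ => ω * (8 * η * t + 2 * η + ω * Real.exp t) / (4 * η * t + 3 * η + ω * Real.exp t))
      (Set.Icc 0 tstar) ∧
    StrictAntiOn
      (fun t : ℝ => ω * (8 * η * t + 2 * η + ω * Real.exp t) / (4 * η * t + 3 * η + ω * Real.exp t))
      (Set.Ici tstar) ∧
    (∀ t : ℝ, 0 ≤ t → t ≠ tstar →
      ω * (8 * η * t + 2 * η + ω * Real.exp t) / (4 * η * t + 3 * η + ω * Real.exp t)
        < ω * (8 * η * tstar + 2 * η + ω * Real.exp tstar)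
            / (4 * η * tstar + 3 * η + ω * Real.exp tstar)) ∧
    (∀ y : ℝ, 0 ≤ y → y ≠ tstar / ω →
      shihaHazard ω η y < shihaHazard ω η (tstar / ω)) := by
  have hmono := strictMonoOn_shihaRescaledHazard hω hη ht heq
  have hanti := strictAntiOn_shihaRescaledHazard hω hη ht heq
  have hmax : ∀ t, 0 ≤ t → t ≠ tstar →
      shihaRescaledHazard ω η t < shihaRescaledHazard ω η tstar :=
    fun t h0 hne => hmono.lt_of_strictAntiOn_Ici hanti (by linarith) h0 hne
  refine ⟨hmono, hanti, hmax, fun y hy hne => ?_⟩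
  rw [shihaHazard_eq_shihaRescaledHazard, shihaHazard_eq_shihaRescaledHazard,
    mul_div_cancel₀ _ hω.ne']
  refine hmax _ (by positivity) fun h => hne ?_
  rw [← h, mul_div_cancel_left₀ _ hω.ne']
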